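/- Let I = [x₁, x₂] ⊆ [0, y₂] be a closed interval and let f be a continuous real-valued function on the set {(x, y) ∈ I × [0, y₂] : y ≥ x} with f(x, y₂) = 0 and f(x, x) ≤ 1 for all x ∈ I, satisfying the Lipschitz bound |f(x, y) − f(x, z)| ≤ C(x)|y − z| for all x ∈ I and y, z ∈ [x, y₂], with C : I → [0, ∞) continuous. Then for every y₀ ∈ [x₂, y₂] there is a unique solution y(x) of y'(x) = f(x, y(x)) with final condition y(x₂) = y₀, defined on all of I, and this solution satisfies y(x) ∈ [x, y₂] for all x ∈ I. -/

import Mathlib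

open Set
open scoped NNReal

/-!
Clamping `y` into `[x, y₂]` extends `f` to a field on the whole strip over `[x₁, x₂]` that agrees
with `f` on the triangle and is Lipschitz in `y` with a bound of `C` as constant, so Picard–Lindelöf
gives a solution `g` on all of `[x₁, x₂]` with `g x₂ = y₀`. This solution never leaves the
triangle: above `y₂` the extended field vanishes and below the diagonal it equals `f x x ≤ 1`,
so once outside, `g` would stay outside up to `x₂`, contradicting `y₀ ∈ [x₂, y₂]`. Hence `g`
solves the original equation, and uniqueness is Gronwall's inequality on the triangle.
-/

theorem nonneg_of_right_nonneg_of_deriv_nonpos_where_neg {a b : ℝ} {h h' : ℝ → ℝ}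
    (hcont : ContinuousOn h (Icc a b))
    (hder : ∀ x ∈ Ico a b, HasDerivWithinAt h (h' x) (Ici x) x)
    (hneg : ∀ x ∈ Ico a b, h x < 0 → h' x ≤ 0) (hb : 0 ≤ h b) :
    ∀ x ∈ Icc a b, 0 ≤ h x := by
  intro c hc
  by_contra! hc0
  have hcb : c < b := lt_of_le_of_ne hc.2 (by rintro rfl; linarith)
  -- compare `h` with a line of small positive slope `ε`, which `h` can never cross upwards
  set ε := -h c / (2 * (b - c))
  have hε : 0 < ε := div_pos (by linarith) (by linarith)
  have hεb : h c + ε * (b - c) = h c / 2 := by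
    have : b - c ≠ 0 := sub_ne_zero.2 hcb.ne'
    simp only [ε]; field_simp; ring
  have hline : ∀ x ∈ Icc c b, h x ≤ h c + ε * (x - c) := by
    refine image_le_of_deriv_right_lt_deriv_boundary (B' := fun _ => ε)
      (hcont.mono (Icc_subset_Icc_left hc.1)) (fun x hx => hder x ⟨hc.1.trans hx.1, hx.2⟩)
      (by simp) (fun x => ?_) fun x hx hhx => ?_
    · simpa using ((hasDerivAt_id x).sub_const c).const_mul ε |>.const_add (h c)
    · have : ε * (x - c) ≤ ε * (b - c) := by gcongr; exact hx.2.le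
      exact (hneg x ⟨hc.1.trans hx.1, hx.2⟩ (by linarith)).trans_lt hε
  linarith [hline b (right_mem_Icc.2 hcb.le)]

theorem exists_forall_mem_Icc_hasDerivWithinAt_of_lipschitzWith {E : Type*}
    [NormedAddCommGroup E] [NormedSpace ℝ E] [CompleteSpace E] {v : ℝ → E → E}
    {a b t₀ : ℝ} {K L : ℝ≥0} (ht₀ : t₀ ∈ Icc a b) (x₀ : E)
    (hlip : ∀ t ∈ Icc a b, LipschitzWith K (v t))
    (hcont : ∀ x, ContinuousOn (v · x) (Icc a b))
    (hbound : ∀ t ∈ Icc a b, ∀ x, ‖v t x‖ ≤ L) :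
    ∃ α : ℝ → E, α t₀ = x₀ ∧ ∀ t ∈ Icc a b, HasDerivWithinAt α (v t (α t)) (Icc a b) t := by
  set T : ℝ≥0 := (max (b - t₀) (t₀ - a)).toNNReal
  have hpl : IsPicardLindelof v (⟨t₀, ht₀⟩ : Icc a b) x₀ (L * T) 0 L K :=
    { lipschitzOnWith := fun t ht => (hlip t ht).lipschitzOnWith
      continuousOn := fun x _ => hcont x
      norm_le := fun t ht x _ => hbound t ht x
      mul_max_le := by
        simp [T, Real.coe_toNNReal _ (le_max_of_le_left (sub_nonneg.2 ht₀.2))] }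
  exact hpl.exists_eq_forall_mem_Icc_hasDerivWithinAt₀

theorem ODE_solution_unique_of_hasDerivWithinAt_Icc_left {E : Type*} [NormedAddCommGroup E]
    [NormedSpace ℝ E] {v : ℝ → E → E} {s : ℝ → Set E} {K : ℝ≥0} {f g : ℝ → E} {a b : ℝ}
    (hv : ∀ t ∈ Ioc a b, LipschitzOnWith K (v t) (s t))
    (hf : ∀ t ∈ Icc a b, HasDerivWithinAt f (v t (f t)) (Icc a b) t)
    (hfs : ∀ t ∈ Ioc a b, f t ∈ s t)
    (hg : ∀ t ∈ Icc a b, HasDerivWithinAt g (v t (g t)) (Icc a b) t)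
    (hgs : ∀ t ∈ Ioc a b, g t ∈ s t) (hb : f b = g b) :
    EqOn f g (Icc a b) :=
  ODE_solution_unique_of_mem_Icc_left hv (fun t ht => (hf t ht).continuousWithinAt)
    (fun t ht => (hf t (Ioc_subset_Icc_self ht)).mono_of_mem_nhdsWithin
      (Icc_mem_nhdsLE_of_mem ht)) hfs
    (fun t ht => (hg t ht).continuousWithinAt)
    (fun t ht => (hg t (Ioc_subset_Icc_self ht)).mono_of_mem_nhdsWithin
      (Icc_mem_nhdsLE_of_mem ht)) hgs hb

theorem max_min_mem_Icc {a b y : ℝ} (h : a ≤ b) : max a (min y b) ∈ Icc a b :=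
  ⟨le_max_left _ _, max_le h (min_le_right _ _)⟩

def extendTriangle (f : ℝ → ℝ → ℝ) (y₂ x y : ℝ) : ℝ :=
  f x (max x (min y y₂))

section extendTriangle

variable {f : ℝ → ℝ → ℝ} {y₂ x y : ℝ}

theorem extendTriangle_of_mem (hy : y ∈ Icc x y₂) : extendTriangle f y₂ x y = f x y := by
  rw [extendTriangle, min_eq_left hy.2, max_eq_right hy.1]

theorem extendTriangle_of_ge (hx : x ≤ y₂) (hy : y₂ ≤ y) : extendTriangle f y₂ x y = f x y₂ := by
  rw [extendTriangle, min_eq_right hy, max_eq_right hx]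

theorem extendTriangle_of_le (hy : y ≤ x) : extendTriangle f y₂ x y = f x x := by
  rw [extendTriangle, max_eq_left (min_le_of_left_le hy)]

theorem lipschitzWith_extendTriangle {K : ℝ≥0} (hx : x ≤ y₂)
    (hf : LipschitzOnWith K (f x) (Icc x y₂)) : LipschitzWith K (extendTriangle f y₂ x) := by
  have hclamp : LipschitzWith 1 fun y : ℝ => max x (min y y₂) :=
    (LipschitzWith.id.min_const y₂).const_max x
  have := hf.comp hclamp.lipschitzOnWith (s := univ) fun y _ => max_min_mem_Icc hx
  rwa [lipschitzOnWith_univ, mul_one] at this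

theorem abs_extendTriangle_le {K : ℝ≥0} (hx : x ≤ y₂)
    (hf : LipschitzOnWith K (f x) (Icc x y₂)) (hzero : f x y₂ = 0) :
    |extendTriangle f y₂ x y| ≤ K * (y₂ - x) := by
  have hq := max_min_mem_Icc (y := y) hx
  calc |extendTriangle f y₂ x y| = dist (f x (max x (min y y₂))) (f x y₂) := by
        rw [Real.dist_eq, hzero, sub_zero, extendTriangle]
    _ ≤ K * dist (max x (min y y₂)) y₂ := hf.dist_le_mul _ hq _ (right_mem_Icc.2 hx)
    _ ≤ K * (y₂ - x) := by
        rw [Real.dist_eq, abs_sub_comm, abs_of_nonneg (sub_nonneg.2 hq.2)]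
        gcongr
        exact hq.1

end extendTriangle

section triangle

variable {f : ℝ → ℝ → ℝ} {x₁ x₂ y₂ : ℝ}

theorem continuousOn_extendTriangle_left
    (hf : ContinuousOn (fun p : ℝ × ℝ => f p.1 p.2)
      {p : ℝ × ℝ | p.1 ∈ Icc x₁ x₂ ∧ p.2 ∈ Icc p.1 y₂})
    (hx₂ : x₂ ≤ y₂) (y : ℝ) : ContinuousOn (extendTriangle f y₂ · y) (Icc x₁ x₂) :=
  hf.comp (f := fun x => (x, max x (min y y₂))) (by fun_prop) fun x hx =>
    ⟨hx, max_min_mem_Icc (hx.2.trans hx₂)⟩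

theorem exists_uniform_lipschitzOnWith {C : ℝ → ℝ}
    (hC : ContinuousOn C (Icc x₁ x₂))
    (hlip : ∀ x ∈ Icc x₁ x₂, ∀ y ∈ Icc x y₂, ∀ z ∈ Icc x y₂,
      |f x y - f x z| ≤ C x * |y - z|) :
    ∃ K : ℝ≥0, ∀ x ∈ Icc x₁ x₂, LipschitzOnWith K (f x) (Icc x y₂) := by
  obtain ⟨M, hM⟩ := isCompact_Icc.exists_bound_of_continuousOn hC
  refine ⟨M.toNNReal, fun x hx => LipschitzOnWith.of_dist_le_mul fun y hy z hz => ?_⟩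
  calc dist (f x y) (f x z) ≤ C x * dist y z := hlip x hx y hy z hz
    _ ≤ M.toNNReal * dist y z := by
        gcongr
        exact (le_abs_self _).trans ((hM x hx).trans (Real.le_coe_toNNReal M))

theorem exists_hasDerivWithinAt_extendTriangle {K : ℝ≥0} (hx : x₁ ≤ x₂) (hx₂ : x₂ ≤ y₂)
    (hf : ContinuousOn (fun p : ℝ × ℝ => f p.1 p.2)
      {p : ℝ × ℝ | p.1 ∈ Icc x₁ x₂ ∧ p.2 ∈ Icc p.1 y₂})
    (hb : ∀ x ∈ Icc x₁ x₂, f x y₂ = 0)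
    (hK : ∀ x ∈ Icc x₁ x₂, LipschitzOnWith K (f x) (Icc x y₂)) (y₀ : ℝ) :
    ∃ g : ℝ → ℝ, g x₂ = y₀ ∧
      ∀ x ∈ Icc x₁ x₂, HasDerivWithinAt g (extendTriangle f y₂ x (g x)) (Icc x₁ x₂) x :=
  exists_forall_mem_Icc_hasDerivWithinAt_of_lipschitzWith (L := K * (y₂ - x₁).toNNReal)
    (right_mem_Icc.2 hx) y₀
    (fun x hx' => lipschitzWith_extendTriangle (hx'.2.trans hx₂) (hK x hx'))
    (continuousOn_extendTriangle_left hf hx₂) fun x hx' y => by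
      have hxy₂ := hx'.2.trans hx₂
      calc ‖extendTriangle f y₂ x y‖ ≤ K * (y₂ - x) :=
            abs_extendTriangle_le hxy₂ (hK x hx') (hb x hx')
        _ ≤ K * (y₂ - x₁).toNNReal := by
            rw [Real.coe_toNNReal _ (by linarith [hx'.1])]
            gcongr
            exact hx'.1

theorem mem_Icc_of_hasDerivWithinAt_extendTriangle {g : ℝ → ℝ} (hx₂ : x₂ ≤ y₂)
    (hb : ∀ x ∈ Icc x₁ x₂, f x y₂ = 0) (hdiag : ∀ x ∈ Icc x₁ x₂, f x x ≤ 1)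
    (hg : ∀ x ∈ Icc x₁ x₂, HasDerivWithinAt g (extendTriangle f y₂ x (g x)) (Icc x₁ x₂) x)
    (hg₂ : g x₂ ∈ Icc x₂ y₂) :
    ∀ x ∈ Icc x₁ x₂, g x ∈ Icc x y₂ := by
  have hcont : ContinuousOn g (Icc x₁ x₂) := fun x hx => (hg x hx).continuousWithinAt
  have hg' : ∀ x ∈ Ico x₁ x₂, HasDerivWithinAt g (extendTriangle f y₂ x (g x)) (Ici x) x :=
    fun x hx => (hg x (Ico_subset_Icc_self hx)).mono_of_mem_nhdsWithin (Icc_mem_nhdsGE_of_mem hx)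
  have hbelow := nonneg_of_right_nonneg_of_deriv_nonpos_where_neg (h := fun x => y₂ - g x)
    (continuousOn_const.sub hcont) (fun x hx => (hg' x hx).const_sub y₂)
    (fun x hx hneg => by
      rw [extendTriangle_of_ge (hx.2.le.trans hx₂) (by linarith),
        hb x (Ico_subset_Icc_self hx), neg_zero])
    (sub_nonneg.2 hg₂.2)
  have habove := nonneg_of_right_nonneg_of_deriv_nonpos_where_neg (h := fun x => g x - x)
    (hcont.sub continuousOn_id) (fun x hx => (hg' x hx).sub (hasDerivWithinAt_id x _))
    (fun x hx hneg => by
      rw [extendTriangle_of_le (by linarith), sub_nonpos]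
      exact hdiag x (Ico_subset_Icc_self hx))
    (sub_nonneg.2 hg₂.1)
  exact fun x hx => ⟨sub_nonneg.1 (habove x hx), sub_nonneg.1 (hbelow x hx)⟩

end triangle

theorem stmt_9_general (x₁ x₂ y₂ : ℝ) (hx : x₁ ≤ x₂) (hx₂ : x₂ ≤ y₂)
    (f : ℝ → ℝ → ℝ) (C : ℝ → ℝ)
    (hf : ContinuousOn (fun p : ℝ × ℝ => f p.1 p.2)
      {p : ℝ × ℝ | p.1 ∈ Icc x₁ x₂ ∧ p.2 ∈ Icc p.1 y₂})
    (hb : ∀ x ∈ Icc x₁ x₂, f x y₂ = 0)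
    (hdiag : ∀ x ∈ Icc x₁ x₂, f x x ≤ 1)
    (hC : ContinuousOn C (Icc x₁ x₂))
    (hlip : ∀ x ∈ Icc x₁ x₂, ∀ y ∈ Icc x y₂, ∀ z ∈ Icc x y₂,
      |f x y - f x z| ≤ C x * |y - z|) :
    ∀ y₀ ∈ Icc x₂ y₂,
      (∃ y : ℝ → ℝ, y x₂ = y₀ ∧ (∀ x ∈ Icc x₁ x₂, y x ∈ Icc x y₂) ∧
        ∀ x ∈ Icc x₁ x₂, HasDerivWithinAt y (f x (y x)) (Icc x₁ x₂) x) ∧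
      (∀ y z : ℝ → ℝ, y x₂ = y₀ → z x₂ = y₀ →
        (∀ x ∈ Icc x₁ x₂, y x ∈ Icc x y₂) → (∀ x ∈ Icc x₁ x₂, z x ∈ Icc x y₂) →
        (∀ x ∈ Icc x₁ x₂, HasDerivWithinAt y (f x (y x)) (Icc x₁ x₂) x) →
        (∀ x ∈ Icc x₁ x₂, HasDerivWithinAt z (f x (z x)) (Icc x₁ x₂) x) →
        ∀ x ∈ Icc x₁ x₂, y x = z x) := by
  intro y₀ hy₀
  obtain ⟨K, hK⟩ := exists_uniform_lipschitzOnWith hC hlip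
  obtain ⟨g, hg₂, hg⟩ := exists_hasDerivWithinAt_extendTriangle hx hx₂ hf hb hK y₀
  have hgT := mem_Icc_of_hasDerivWithinAt_extendTriangle hx₂ hb hdiag hg (hg₂ ▸ hy₀)
  refine ⟨⟨g, hg₂, hgT, fun x hx' => ?_⟩, fun y z hy₂ hz₂ hyT hzT hy hz => ?_⟩
  · simpa only [extendTriangle_of_mem (hgT x hx')] using hg x hx'
  · exact ODE_solution_unique_of_hasDerivWithinAt_Icc_left (s := fun x => Icc x y₂)
      (fun x hx' => hK x (Ioc_subset_Icc_self hx'))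
      hy (fun x hx' => hyT x (Ioc_subset_Icc_self hx'))
      hz (fun x hx' => hzT x (Ioc_subset_Icc_self hx')) (hy₂.trans hz₂.symm)

/-- Existence and uniqueness for the backward ODE on the triangle
`{(x, y) : x ∈ [x₁, x₂], x ≤ y ≤ y₂}`, with the solution staying above the
diagonal. -/
theorem stmt_9 (x₁ x₂ y₂ : ℝ) (hx : x₁ ≤ x₂) (h0 : 0 ≤ x₁) (hx₂ : x₂ ≤ y₂)
    (f : ℝ → ℝ → ℝ) (C : ℝ → ℝ)
    (hf : ContinuousOn (fun p : ℝ × ℝ => f p.1 p.2)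
      {p : ℝ × ℝ | p.1 ∈ Icc x₁ x₂ ∧ p.2 ∈ Icc p.1 y₂})
    (hb : ∀ x ∈ Icc x₁ x₂, f x y₂ = 0)
    (hdiag : ∀ x ∈ Icc x₁ x₂, f x x ≤ 1)
    (hC : ContinuousOn C (Icc x₁ x₂)) (hC0 : ∀ x ∈ Icc x₁ x₂, 0 ≤ C x)
    (hlip : ∀ x ∈ Icc x₁ x₂, ∀ y ∈ Icc x y₂, ∀ z ∈ Icc x y₂,
      |f x y - f x z| ≤ C x * |y - z|) :
    ∀ y₀ ∈ Icc x₂ y₂,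
      (∃ y : ℝ → ℝ, y x₂ = y₀ ∧ (∀ x ∈ Icc x₁ x₂, y x ∈ Icc x y₂) ∧
        ∀ x ∈ Icc x₁ x₂, HasDerivWithinAt y (f x (y x)) (Icc x₁ x₂) x) ∧
      (∀ y z : ℝ → ℝ, y x₂ = y₀ → z x₂ = y₀ →
        (∀ x ∈ Icc x₁ x₂, y x ∈ Icc x y₂) → (∀ x ∈ Icc x₁ x₂, z x ∈ Icc x y₂) →
        (∀ x ∈ Icc x₁ x₂, HasDerivWithinAt y (f x (y x)) (Icc x₁ x₂) x) →
        (∀ x ∈ Icc x₁ x₂, HasDerivWithinAt z (f x (z x)) (Icc x₁ x₂) x) →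
        ∀ x ∈ Icc x₁ x₂, y x = z x) :=
  stmt_9_general x₁ x₂ y₂ hx hx₂ f C hf hb hdiag hC hlip
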